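/- If P and Q are rational polytopes (convex hulls of finitely many points of ℚ^d) in ℝ^d, then the square of the Euclidean distance between P and Q is a rational number. -/

import Mathlib

/-! The difference body `P - Q` is again a rational polytope, and `d(P, Q)` is the norm of its
point `x` nearest to the origin. As a nearest point, `x` minimizes `⟪x, ·⟫` on `P - Q`, so it lies
in the convex hull of the vertices `S` on which `⟪x, ·⟫` is minimal and is orthogonal to the
affine span of `S`: it is the foot of the perpendicular from `0` to that span. Because the
orthogonal decomposition with respect to the dot product can already be carried out over `ℚ`,
this foot is a rational point, so `‖x‖² ∈ ℚ`. -/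

open RealInnerProductSpace Pointwise

theorem Finset.exists_subset_mem_convexHull_forall_apply_eq {𝕜 E : Type*} [Field 𝕜]
    [LinearOrder 𝕜] [IsStrictOrderedRing 𝕜] [AddCommGroup E] [Module 𝕜 E] (f : E →ₗ[𝕜] 𝕜)
    {s : Finset E} {x : E} (hx : x ∈ convexHull 𝕜 (s : Set E)) (hmin : ∀ y ∈ s, f x ≤ f y) :
    ∃ t ⊆ s, x ∈ convexHull 𝕜 (t : Set E) ∧ ∀ y ∈ t, f y = f x := by
  classical
  obtain ⟨w, hw₀, hw₁, rfl⟩ := Finset.mem_convexHull'.1 hx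
  refine ⟨s.filter (w · ≠ 0), filter_subset _ _, Finset.mem_convexHull'.2 ⟨w,
    fun y hy => hw₀ y (mem_filter.1 hy).1, by rwa [sum_filter_ne_zero],
    sum_filter_of_ne fun y _ h hy => h (by rw [hy, zero_smul])⟩, fun y hy => ?_⟩
  set c := f (∑ y ∈ s, w y • y)
  have hsum : ∑ y ∈ s, w y * (f y - c) = 0 := by
    simp only [mul_sub, sum_sub_distrib, ← sum_mul, hw₁, one_mul, c, map_sum, map_smul,
      smul_eq_mul, sub_self]
  have hterm := (sum_eq_zero_iff_of_nonneg fun y hy =>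
    mul_nonneg (hw₀ y hy) (sub_nonneg.2 (hmin y hy))).1 hsum y (mem_filter.1 hy).1
  exact sub_eq_zero.1 ((mul_eq_zero.1 hterm).resolve_left (mem_filter.1 hy).2)

theorem Convex.real_inner_self_le_of_isMinOn_norm {F : Type*} [NormedAddCommGroup F]
    [InnerProductSpace ℝ F] {K : Set F} (hK : Convex ℝ K) {x : F} (hx : x ∈ K)
    (hmin : IsMinOn norm K x) {y : F} (hy : y ∈ K) : ⟪x, x⟫ ≤ ⟪x, y⟫ := by
  have hinf : ‖0 - x‖ = ⨅ w : K, ‖0 - (w : F)‖ := by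
    simpa only [zero_sub, norm_neg] using (hmin.iInf_eq hx).symm
  have := (norm_eq_iInf_iff_real_inner_le_zero hK hx).1 hinf y hy
  rw [zero_sub, inner_neg_left, inner_sub_right] at this
  linarith

theorem Submodule.exists_mem_forall_dotProduct_sub_eq_zero {𝕜 n : Type*} [Field 𝕜]
    [LinearOrder 𝕜] [IsStrictOrderedRing 𝕜] [Fintype n] (W : Submodule 𝕜 (n → 𝕜)) (v : n → 𝕜) :
    ∃ w ∈ W, ∀ s ∈ W, (v - w) ⬝ᵥ s = 0 := by
  have hrefl : (dotProductBilin 𝕜 𝕜 : LinearMap.BilinForm 𝕜 (n → 𝕜)).IsRefl := fun a b h => by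
    simpa [dotProduct_comm] using h
  have hcompl := (LinearMap.BilinForm.isCompl_orthogonal_iff_disjoint hrefl (W := W)).2 <|
    Submodule.disjoint_def.2 fun u hu hu' => dotProduct_self_eq_zero.1 (hu' u hu)
  obtain ⟨w, hw, b, hb, rfl⟩ :=
    Submodule.mem_sup.1 (hcompl.sup_eq_top ▸ Submodule.mem_top (x := v))
  refine ⟨w, hw, fun s hs => ?_⟩
  simpa [dotProduct_comm] using hb s hs

namespace EuclideanSpace

variable {n : Type*}

def ofRat : (n → ℚ) →ₗ[ℚ] EuclideanSpace ℝ n where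
  toFun a := WithLp.toLp 2 fun i => (a i : ℝ)
  map_add' a b := by ext; simp
  map_smul' c a := by ext; simp [Rat.smul_def]

@[simp]
theorem ofRat_apply (a : n → ℚ) (i : n) : ofRat a i = a i := rfl

theorem mem_range_ofRat_iff {v : EuclideanSpace ℝ n} :
    v ∈ Set.range ofRat ↔ ∀ i, ∃ r : ℚ, v i = r := by
  constructor
  · rintro ⟨a, rfl⟩ i
    exact ⟨a i, rfl⟩
  · intro h
    choose a ha using h
    exact ⟨a, by ext i; simp [ha]⟩

theorem image_vectorSpan_ofRat_subset (s : Set (n → ℚ)) :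
    ofRat '' (vectorSpan ℚ s : Set (n → ℚ)) ⊆ vectorSpan ℝ (ofRat '' s) := by
  rw [vectorSpan_def, ← Submodule.map_coe, Submodule.map_span, vectorSpan_def]
  intro y hy
  refine Submodule.span_le_restrictScalars ℚ ℝ _ (Submodule.span_mono ?_ hy)
  rintro _ ⟨_, ⟨a, ha, b, hb, rfl⟩, rfl⟩
  exact ⟨ofRat a, ⟨a, ha, rfl⟩, ofRat b, ⟨b, hb, rfl⟩, (map_sub ofRat a b).symm⟩

variable [Fintype n]

theorem inner_ofRat (a b : n → ℚ) : ⟪ofRat a, ofRat b⟫ = ((a ⬝ᵥ b : ℚ) : ℝ) := by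
  simp [PiLp.inner_apply, dotProduct, mul_comm]

theorem mem_range_ofRat_of_mem_affineSpan_of_inner_sub_eq_zero {T : Set (EuclideanSpace ℝ n)}
    (hT : T ⊆ Set.range ofRat) {x : EuclideanSpace ℝ n} (hx : x ∈ affineSpan ℝ T)
    (horth : ∀ u ∈ T, ∀ v ∈ T, ⟪x, u - v⟫ = 0) :
    x ∈ Set.range ofRat := by
  set s : Set (n → ℚ) := ofRat ⁻¹' T
  have hs : ofRat '' s = T := Set.image_preimage_eq_of_subset hT
  obtain ⟨a₀, ha₀⟩ : s.Nonempty := by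
    by_contra! h
    rw [← hs, h, Set.image_empty, AffineSubspace.span_empty] at hx
    exact AffineSubspace.notMem_bot ℝ _ x hx
  obtain ⟨w, hw, hc⟩ := (vectorSpan ℚ s).exists_mem_forall_dotProduct_sub_eq_zero a₀
  -- `a₀ - w` is the foot of the perpendicular from `0` to `affineSpan ℝ T`, computed over `ℚ`.
  refine ⟨a₀ - w, Eq.symm <| sub_eq_zero.1 ?_⟩
  set z := x - ofRat (a₀ - w)
  have hzV : z ∈ vectorSpan ℝ T := by
    have hx₀ : x - ofRat a₀ ∈ vectorSpan ℝ T :=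
      vsub_mem_vectorSpan_of_mem_affineSpan_of_mem_affineSpan hx
        (subset_affineSpan ℝ T (hs ▸ Set.mem_image_of_mem ofRat ha₀))
    have hw' : ofRat w ∈ vectorSpan ℝ T := hs ▸ image_vectorSpan_ofRat_subset s ⟨w, hw, rfl⟩
    simpa [z, sub_add] using add_mem hx₀ hw'
  have hzorth : Submodule.span ℝ {z} ⟂ vectorSpan ℝ T := by
    rw [vectorSpan_def, Submodule.isOrtho_span]
    rintro _ rfl _ ⟨u, hu, v, hv, rfl⟩
    obtain ⟨a, rfl⟩ := hT hu
    obtain ⟨b, rfl⟩ := hT hv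
    have hab : a - b ∈ vectorSpan ℚ s :=
      vsub_mem_vectorSpan ℚ (show a ∈ s from hu) (show b ∈ s from hv)
    change ⟪z, ofRat a - ofRat b⟫ = 0
    rw [inner_sub_left, horth _ hu _ hv, ← map_sub, inner_ofRat, hc _ hab]
    simp
  exact inner_self_eq_zero.1 (hzorth.inner_eq (Submodule.mem_span_singleton_self z) hzV)

end EuclideanSpace

theorem stmt_3 (d : ℕ) (P Q : Set (EuclideanSpace ℝ (Fin d)))
    (VP VQ : Finset (EuclideanSpace ℝ (Fin d))) (hVP : VP.Nonempty) (hVQ : VQ.Nonempty)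
    (hratP : ∀ v ∈ VP, ∀ i, ∃ r : ℚ, v i = r)
    (hratQ : ∀ v ∈ VQ, ∀ i, ∃ r : ℚ, v i = r)
    (hP : P = convexHull ℝ (VP : Set (EuclideanSpace ℝ (Fin d))))
    (hQ : Q = convexHull ℝ (VQ : Set (EuclideanSpace ℝ (Fin d)))) :
    ∃ r : ℚ, (sInf (Set.image2 dist P Q)) ^ 2 = (r : ℝ) := by
  classical
  set D := VP - VQ
  set K := convexHull ℝ (D : Set (EuclideanSpace ℝ (Fin d))) with hK
  have hD : (D : Set (EuclideanSpace ℝ (Fin d))) ⊆ Set.range EuclideanSpace.ofRat := by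
    intro _ h
    obtain ⟨u, hu, v, hv, rfl⟩ := Finset.mem_sub.1 h
    obtain ⟨a, rfl⟩ := EuclideanSpace.mem_range_ofRat_iff.2 (hratP u hu)
    obtain ⟨b, rfl⟩ := EuclideanSpace.mem_range_ofRat_iff.2 (hratQ v hv)
    exact ⟨a - b, map_sub EuclideanSpace.ofRat a b⟩
  have hPQ : Set.image2 dist P Q = norm '' K := by
    rw [hP, hQ, hK, Finset.coe_sub, convexHull_sub, ← Set.image2_sub, Set.image_image2]
    simp only [dist_eq_norm]
  obtain ⟨x, hxK, hmin⟩ := (D.finite_toSet.isCompact_convexHull ℝ).exists_isMinOn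
    (Finset.coe_nonempty.2 (hVP.sub hVQ)).convexHull continuous_norm.continuousOn
  obtain ⟨S, hSD, hxS, hS⟩ :=
    Finset.exists_subset_mem_convexHull_forall_apply_eq (innerₗ _ x) hxK fun y hy =>
      (convex_convexHull ℝ _).real_inner_self_le_of_isMinOn_norm hxK hmin
        (subset_convexHull ℝ _ hy)
  obtain ⟨c, rfl⟩ := EuclideanSpace.mem_range_ofRat_of_mem_affineSpan_of_inner_sub_eq_zero
    ((Finset.coe_subset.2 hSD).trans hD) (convexHull_subset_affineSpan _ hxS) fun u hu v hv => by
      simp only [innerₗ_apply_apply] at hS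
      rw [inner_sub_right, hS u hu, hS v hv, sub_self]
  refine ⟨c ⬝ᵥ c, ?_⟩
  rw [hPQ, sInf_image', hmin.iInf_eq hxK, ← real_inner_self_eq_norm_sq,
    EuclideanSpace.inner_ofRat]
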